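/- If Y = γ₀ + Σ_{r=1}^p γ_r X_r + e with E[e]=0, the random variables e, U, X_1,…,X_p are mutually independent, and the observed variables are X̃_r = φ_r(U)X_r and Ỹ = ψ(U)Y for measurable functions ψ, φ_r with φ_r > 0, then E[Ỹ | X̃_1,…,X̃_p, U] = β₀(U) + Σ_{r=1}^p β_r(U) X̃_r, where β₀(u) = ψ(u)γ₀ and β_r(u) = γ_r ψ(u)/φ_r(u). -/

import Mathlib

/-!
Substituting the model gives `Ỹ = β₀(U) + Σ β_r(U) X̃_r + ψ(U) e`, and the first part is a
measurable function of the observed vector `(X̃, U)`. The observed σ-algebra lies inside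
`σ(U, X₁, …, X_p)`, which is independent of `e`; hence for every observable event `s`,
`∫_s ψ(U) e = E[1_s ψ(U)] E[e] = 0`, so the noise term has conditional expectation zero.
-/

open MeasureTheory ProbabilityTheory

namespace ProbabilityTheory

variable {Ω : Type*} {m m' : MeasurableSpace Ω} [mΩ : MeasurableSpace Ω] {μ : Measure Ω}

theorem iIndepFun.indep_iSup_comap_succ_comap_zero {n : ℕ} {β : Fin (n + 1) → Type*}
    [mβ : ∀ i, MeasurableSpace (β i)] {f : ∀ i, Ω → β i} (hf : ∀ i, Measurable (f i))
    (h : iIndepFun f μ) :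
    Indep (⨆ i : Fin n, (mβ i.succ).comap (f i.succ)) ((mβ 0).comap (f 0)) μ := by
  have key := indep_iSup_of_disjoint (fun i => (hf i).comap_le)
    ((iIndepFun_iff_iIndep _ _ _).mp h)
    (S := Set.range Fin.succ) (T := {0}) (by simp [Set.disjoint_singleton_right])
  simpa only [iSup_range, iSup_singleton] using key

theorem condExp_mul_eq_zero_of_indep [IsFiniteMeasure μ] {g e : Ω → ℝ} (hm : m ≤ m')
    (hm' : m' ≤ mΩ) (hg : Measurable[m'] g) (he : AEStronglyMeasurable[mΩ] e μ)
    (hindep : Indep m' (MeasurableSpace.comap e inferInstance) μ)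
    (he0 : μ[e] = 0) :
    μ[g * e | m] =ᵐ[μ] 0 := by
  by_cases hge : Integrable (g * e) μ
  swap
  · rw [condExp_of_not_integrable hge]
  refine (ae_eq_condExp_of_forall_setIntegral_eq (hm.trans hm') hge
    (fun _ _ _ => integrableOn_zero) (fun s hs _ => ?_) aestronglyMeasurable_zero).symm
  have hgs : Measurable[m'] (s.indicator g) := hg.indicator (hm s hs)
  have hind : IndepFun (s.indicator g) e μ :=
    (IndepFun_iff_Indep _ _ _).mpr (indep_of_indep_of_le_left hindep hgs.comap_le)
  -- The product formula for independent variables needs no integrability, hence neither does `e`.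
  calc ∫ ω in s, (0 : Ω → ℝ) ω ∂μ = 0 := by simp
    _ = ∫ ω, s.indicator g ω * e ω ∂μ := by
      rw [hind.integral_fun_mul_eq_mul_integral
        (hgs.mono hm' le_rfl).aestronglyMeasurable he, he0, mul_zero]
    _ = ∫ ω in s, (g * e) ω ∂μ := by
      rw [← integral_indicator (hm' _ (hm s hs))]
      congr 1 with ω
      exact (Set.indicator_mul_left s g e).symm

theorem condExp_add_mul_eq_of_indep [IsFiniteMeasure μ] {T g e : Ω → ℝ} (hm : m ≤ m')
    (hm' : m' ≤ mΩ) (hT : StronglyMeasurable[m] T) (hTint : Integrable T μ)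
    (hg : Measurable[m'] g) (he : AEStronglyMeasurable[mΩ] e μ)
    (hge : Integrable (g * e) μ) (hindep : Indep m' (MeasurableSpace.comap e inferInstance) μ)
    (he0 : μ[e] = 0) :
    μ[T + g * e | m] =ᵐ[μ] T := by
  have hnoise := condExp_mul_eq_zero_of_indep hm hm' hg he hindep he0
  filter_upwards [condExp_add hTint hge m, hnoise] with ω hadd hzero
  rw [hadd, Pi.add_apply, hzero, condExp_of_stronglyMeasurable (hm.trans hm') hT hTint]
  simp

end ProbabilityTheory

theorem stmt_0_general {Ω : Type*} [m0 : MeasurableSpace Ω] (μ : Measure Ω) [IsProbabilityMeasure μ]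
    (p : ℕ) (γ₀ : ℝ) (γ : Fin p → ℝ)
    (X : Fin p → Ω → ℝ) (U e : Ω → ℝ)
    (hXmeas : ∀ r, Measurable (X r)) (hUmeas : Measurable U) (hemeas : Measurable e)
    (ψ : ℝ → ℝ) (φ : Fin p → ℝ → ℝ)
    (hψ : Measurable ψ) (hφ : ∀ r, Measurable (φ r)) (hφpos : ∀ r u, 0 < φ r u)
    (hindep : iIndepFun
      (Fin.cons e (Fin.cons U X : Fin (p + 1) → Ω → ℝ) : Fin (p + 2) → Ω → ℝ) μ)
    (he0 : ∫ ω, e ω ∂μ = 0)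
    (Y : Ω → ℝ) (hY : ∀ ω, Y ω = γ₀ + (∑ r, γ r * X r ω) + e ω)
    (Xt : Fin p → Ω → ℝ) (hXt : ∀ r ω, Xt r ω = φ r (U ω) * X r ω)
    (Yt : Ω → ℝ) (hYt : ∀ ω, Yt ω = ψ (U ω) * Y ω)
    (hint : Integrable Yt μ)
    (hinte : Integrable (fun ω => ψ (U ω) * e ω) μ)
    (mObs : MeasurableSpace Ω)
    (hmObs : mObs = MeasurableSpace.comap
      (fun ω => ((fun r => Xt r ω : Fin p → ℝ), U ω)) inferInstance) :
    μ[Yt | mObs] =ᵐ[μ]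
      fun ω => ψ (U ω) * γ₀ + ∑ r, γ r * ψ (U ω) / φ r (U ω) * Xt r ω := by
  subst hmObs
  set F : Ω → (Fin p → ℝ) × ℝ := fun ω => ((fun r => Xt r ω : Fin p → ℝ), U ω)
  set Z : Fin (p + 1) → Ω → ℝ := Fin.cons U X
  have hZ : ∀ i, Measurable (Z i) := Fin.cases hUmeas hXmeas
  have hZtail : ∀ i, Measurable[⨆ j, MeasurableSpace.comap (Z j) inferInstance] (Z i) :=
    fun i => Measurable.of_comap_le (le_iSup_of_le i le_rfl)
  have hF : Measurable[⨆ j, MeasurableSpace.comap (Z j) inferInstance] F := by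
    -- makes the tail σ-algebra the ambient instance expected by `measurable_pi_lambda`
    let := ⨆ j, MeasurableSpace.comap (Z j) inferInstance
    refine .prodMk (measurable_pi_lambda _ fun r => ?_) (hZtail 0)
    simp only [hXt]
    exact ((hφ r).comp (hZtail 0)).mul (hZtail r.succ)
  set T := fun ω => ψ (U ω) * γ₀ + ∑ r, γ r * ψ (U ω) / φ r (U ω) * Xt r ω
  have hYt_eq : Yt = T + (fun ω => ψ (U ω)) * e := by
    ext ω
    have hcoef : ∀ r, γ r * ψ (U ω) / φ r (U ω) * Xt r ω = ψ (U ω) * (γ r * X r ω) :=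
      fun r => by
        rw [hXt]
        field_simp [(hφpos r (U ω)).ne']
    simp only [T, Pi.add_apply, Pi.mul_apply, hYt, hY, hcoef, ← Finset.mul_sum]
    ring
  have hT : StronglyMeasurable[MeasurableSpace.comap F inferInstance] T := by
    have hG : Measurable fun q : (Fin p → ℝ) × ℝ =>
        ψ q.2 * γ₀ + ∑ r, γ r * ψ q.2 / φ r q.2 * q.1 r := by
      fun_prop
    exact (hG.comp (Measurable.of_comap_le le_rfl)).stronglyMeasurable
  have hTint : Integrable T μ := by
    convert hint.sub hinte using 1
    ext ω
    simp [hYt_eq]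
  rw [hYt_eq]
  exact condExp_add_mul_eq_of_indep hF.comap_le (iSup_le fun i => (hZ i).comap_le) hT hTint
    (hψ.comp (hZtail 0)) hemeas.aestronglyMeasurable hinte
    (hindep.indep_iSup_comap_succ_comap_zero (Fin.cases hemeas hZ)) he0

/-- CAR model: if `Y = γ₀ + Σ γ_r X_r + e`, with `e, U, X₁,…,X_p` mutually independent,
`E e = 0`, and one observes `X̃_r = φ_r(U) X_r`, `Ỹ = ψ(U) Y`, then
`E[Ỹ | X̃₁,…,X̃_p, U] = β₀(U) + Σ β_r(U) X̃_r` with `β₀(u) = ψ(u)γ₀`,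
`β_r(u) = γ_r ψ(u)/φ_r(u)`. -/
theorem stmt_0 {Ω : Type*} [m0 : MeasurableSpace Ω] (μ : Measure Ω) [IsProbabilityMeasure μ]
    (p : ℕ) (γ₀ : ℝ) (γ : Fin p → ℝ)
    (X : Fin p → Ω → ℝ) (U e : Ω → ℝ)
    (hXmeas : ∀ r, Measurable (X r)) (hUmeas : Measurable U) (hemeas : Measurable e)
    (ψ : ℝ → ℝ) (φ : Fin p → ℝ → ℝ)
    (hψ : Measurable ψ) (hφ : ∀ r, Measurable (φ r)) (hφpos : ∀ r u, 0 < φ r u)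
    (hindep : iIndepFun
      (Fin.cons e (Fin.cons U X : Fin (p + 1) → Ω → ℝ) : Fin (p + 2) → Ω → ℝ) μ)
    (he0 : ∫ ω, e ω ∂μ = 0)
    (Y : Ω → ℝ) (hY : ∀ ω, Y ω = γ₀ + (∑ r, γ r * X r ω) + e ω)
    (Xt : Fin p → Ω → ℝ) (hXt : ∀ r ω, Xt r ω = φ r (U ω) * X r ω)
    (Yt : Ω → ℝ) (hYt : ∀ ω, Yt ω = ψ (U ω) * Y ω)
    (hint : Integrable Yt μ)
    (hintX : ∀ r, Integrable (fun ω => ψ (U ω) * X r ω) μ)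
    (hinte : Integrable (fun ω => ψ (U ω) * e ω) μ)
    (mObs : MeasurableSpace Ω)
    (hmObs : mObs = MeasurableSpace.comap
      (fun ω => ((fun r => Xt r ω : Fin p → ℝ), U ω)) inferInstance) :
    μ[Yt | mObs] =ᵐ[μ]
      fun ω => ψ (U ω) * γ₀ + ∑ r, γ r * ψ (U ω) / φ r (U ω) * Xt r ω :=
  stmt_0_general (m0 := m0) μ p γ₀ γ X U e hXmeas hUmeas hemeas ψ φ hψ hφ hφpos hindep he0 Y hY Xt
    hXt Yt hYt hint hinte mObs hmObs
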